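/- arXiv:2104.06519 — 3 statements merged into one kernel-verified Lean document; each statement's English description precedes it below -/
import Mathlib

section
/- Let G be a digraph and v_0 a vertex of G with in-degree ind(v_0), out-degree oud(v_0), total degree deg(v_0) = ind(v_0) + oud(v_0), and R_{v_0} reciprocal neighbours. Let Ĝ(v_0) be the digraph whose vertices are v_0 together with all neighbours of v_0, whose edges incident to v_0 are exactly those of G, and in which every ordered pair of distinct neighbours of v_0 is an edge (all pairs of neighbours are reciprocally connected). Then the number of directed 3-cliques of Ĝ(v_0) that contain v_0 equals deg(v_0)(deg(v_0) − 1) − (ind(v_0)·oud(v_0) + R_{v_0}). -/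
/-- A directed `k`-clique in a digraph with adjacency relation `Adj`, given as a
`k`-tuple of distinct vertices with an edge from earlier to later vertices. -/
def IsDirClique {V : Type*} (Adj : V → V → Prop) {k : ℕ} (f : Fin k → V) : Prop :=
  Function.Injective f ∧ ∀ i j : Fin k, i < j → Adj (f i) (f j)

/-- The number of directed `(j+1)`-cliques containing the vertex `v₀`. -/
noncomputable def cliqueCountAt {V : Type*} (Adj : V → V → Prop) (v₀ : V) (j : ℕ) : ℕ :=
  Nat.card {f : Fin (j + 1) → V // IsDirClique Adj f ∧ ∃ i, f i = v₀}

lemma isDirClique3 {V : Type*} (Adj : V → V → Prop) {x y z : V} (hxy : x ≠ y) (hxz : x ≠ z)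
    (hyz : y ≠ z) (a1 : Adj x y) (a2 : Adj x z) (a3 : Adj y z) :
    IsDirClique Adj ![x, y, z] := by
  constructor
  · intro i j hij
    fin_cases i <;> fin_cases j <;> simp_all
  · intro i j hij
    fin_cases i <;> fin_cases j <;>
      first
      | exact absurd hij (by decide)
      | exact a1
      | exact a2
      | exact a3

lemma card_offdiag {α : Type*} [Finite α] :
    Nat.card {p : α × α // p.1 ≠ p.2} + Nat.card α = Nat.card α * Nat.card α := by
  classical
  have e1 : Nat.card {p : α × α // p.1 = p.2} = Nat.card α := by
    apply Nat.card_congr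
    refine ⟨fun p => p.1.1, fun a => ⟨(a, a), rfl⟩, ?_, fun a => rfl⟩
    rintro ⟨⟨a, b⟩, h⟩
    cases h
    rfl
  have e2 : Nat.card {p : α × α // p.1 = p.2} + Nat.card {p : α × α // p.1 ≠ p.2} =
      Nat.card (α × α) := by
    rw [← Nat.card_sum]
    exact Nat.card_congr (Equiv.sumCompl _)
  rw [Nat.card_prod] at e2
  omega

/-- in the digraph `Ĝ(v₀)` obtained from `G` by keeping the edges incident
to `v₀` and connecting all pairs of distinct neighbours of `v₀` reciprocally, the number
of directed 3-cliques containing `v₀` is `deg(v₀)(deg(v₀)-1) - (ind(v₀)·oud(v₀) + R_{v₀})`. -/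
theorem stmt0 {V : Type*} [Fintype V] (Adj : V → V → Prop) (hirr : Irreflexive Adj) (v₀ : V)
    (AdjHat : V → V → Prop)
    (hAdjHat : ∀ x y : V, AdjHat x y ↔ x ≠ y ∧
      ((x = v₀ ∧ Adj v₀ y) ∨ (y = v₀ ∧ Adj x v₀) ∨
       (x ≠ v₀ ∧ y ≠ v₀ ∧ (Adj v₀ x ∨ Adj x v₀) ∧ (Adj v₀ y ∨ Adj y v₀))))
    (ind oud R deg : ℕ)
    (hind : ind = Nat.card {x : V // Adj x v₀})
    (houd : oud = Nat.card {x : V // Adj v₀ x})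
    (hR : R = Nat.card {x : V // Adj v₀ x ∧ Adj x v₀})
    (hdeg : deg = ind + oud) :
    (cliqueCountAt AdjHat v₀ 2 : ℤ) =
      (deg : ℤ) * ((deg : ℤ) - 1) - ((ind : ℤ) * (oud : ℤ) + (R : ℤ)) := by
  classical
  -- basic facts about AdjHat
  have hout : ∀ y, AdjHat v₀ y ↔ Adj v₀ y := by
    intro y
    rw [hAdjHat]
    constructor
    · rintro ⟨hne, (⟨-, h⟩ | ⟨hy, -⟩ | ⟨hx, -⟩)⟩
      · exact h
      · exact absurd hy.symm hne
      · exact absurd rfl hx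
    · intro h
      exact ⟨fun he => hirr v₀ (he ▸ h), Or.inl ⟨rfl, h⟩⟩
  have hin : ∀ x, AdjHat x v₀ ↔ Adj x v₀ := by
    intro x
    rw [hAdjHat]
    constructor
    · rintro ⟨hne, (⟨hx, h⟩ | ⟨-, h⟩ | ⟨-, hy, -⟩)⟩
      · exact absurd hx hne
      · exact h
      · exact absurd rfl hy
    · intro h
      exact ⟨fun he => hirr v₀ (he ▸ h), Or.inr (Or.inl ⟨rfl, h⟩)⟩
  have hnbr : ∀ x y : V, x ≠ y → (Adj v₀ x ∨ Adj x v₀) → (Adj v₀ y ∨ Adj y v₀) →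
      AdjHat x y := by
    intro x y hxy hx hy
    have hxv : x ≠ v₀ := by rintro rfl; cases hx <;> exact hirr _ ‹_›
    have hyv : y ≠ v₀ := by rintro rfl; cases hy <;> exact hirr _ ‹_›
    rw [hAdjHat]
    exact ⟨hxy, Or.inr (Or.inr ⟨hxv, hyv, hx, hy⟩)⟩
  set I := {x : V // Adj x v₀} with hI
  set O := {x : V // Adj v₀ x} with hO
  have hIne : ∀ x : I, (x : V) ≠ v₀ := fun x he => hirr v₀ (by simpa [he] using x.2)
  have hOne : ∀ x : O, (x : V) ≠ v₀ := fun x he => hirr v₀ (by simpa [he] using x.2)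
  -- the sum type
  let S := ({p : O × O // p.1 ≠ p.2} ⊕ {p : I × I // p.1 ≠ p.2}) ⊕
      {p : I × O // (p.1 : V) ≠ (p.2 : V)}
  let T := {f : Fin 3 → V // IsDirClique AdjHat f ∧ ∃ i, f i = v₀}
  let g : S → T := fun s =>
    match s with
    | .inl (.inl ⟨(a, b), hab⟩) =>
        ⟨![v₀, (a : V), (b : V)], by
          refine ⟨isDirClique3 _ (Ne.symm (hOne a)) (Ne.symm (hOne b))
            (fun h => hab (Subtype.ext h)) ((hout _).2 a.2) ((hout _).2 b.2)
            (hnbr _ _ (fun h => hab (Subtype.ext h)) (Or.inl a.2) (Or.inl b.2)), 0, rfl⟩⟩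
    | .inl (.inr ⟨(a, b), hab⟩) =>
        ⟨![(a : V), (b : V), v₀], by
          refine ⟨isDirClique3 _ (fun h => hab (Subtype.ext h)) (hIne a) (hIne b)
            (hnbr _ _ (fun h => hab (Subtype.ext h)) (Or.inr a.2) (Or.inr b.2))
            ((hin _).2 a.2) ((hin _).2 b.2), 2, rfl⟩⟩
    | .inr ⟨(a, b), hab⟩ =>
        ⟨![(a : V), v₀, (b : V)], by
          refine ⟨isDirClique3 _ (hIne a) hab (Ne.symm (hOne b))
            ((hin _).2 a.2) (hnbr _ _ hab (Or.inr a.2) (Or.inl b.2))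
            ((hout _).2 b.2), 1, rfl⟩⟩
  have hbij : Function.Bijective g := by
    constructor
    · rintro (((⟨⟨a, b⟩, hab⟩ | ⟨⟨a, b⟩, hab⟩)) | ⟨⟨a, b⟩, hab⟩)
        (((⟨⟨a', b'⟩, hab'⟩ | ⟨⟨a', b'⟩, hab'⟩)) | ⟨⟨a', b'⟩, hab'⟩) hst <;>
      · have hv := congrFun (congrArg Subtype.val hst)
        have h0 := hv 0
        have h1 := hv 1
        have h2 := hv 2
        simp only [g, Matrix.cons_val_zero, Matrix.cons_val_one, Matrix.head_cons] at h0 h1 h2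
        first
        | exact absurd h0.symm (hIne a')
        | exact absurd h0 (hIne a)
        | exact absurd h2.symm (hOne b')
        | exact absurd h2 (hOne b)
        | exact absurd h1.symm (hIne a')
        | exact absurd h1 (hIne a)
        | exact absurd h1.symm (hOne b')
        | exact absurd h1 (hOne b)
        | (have ea : a = a' := Subtype.ext (by first | exact h0 | exact h1)
           have eb : b = b' := Subtype.ext (by first | exact h2 | exact h1)
           subst ea
           subst eb
           rfl)
    · rintro ⟨f, ⟨hinj, hadj⟩, i, hfi⟩
      have hne01 : f 0 ≠ f 1 := fun h => by simpa using hinj h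
      have hne02 : f 0 ≠ f 2 := fun h => by simpa using hinj h
      have hne12 : f 1 ≠ f 2 := fun h => by simpa using hinj h
      have h01 := hadj 0 1 (by decide)
      have h02 := hadj 0 2 (by decide)
      have h12 := hadj 1 2 (by decide)
      fin_cases i
      · -- f 0 = v₀
        have ha : Adj v₀ (f 1) := (hout _).1 (hfi ▸ h01)
        have hb : Adj v₀ (f 2) := (hout _).1 (hfi ▸ h02)
        refine ⟨.inl (.inl ⟨(⟨f 1, ha⟩, ⟨f 2, hb⟩), fun h => hne12 (congrArg Subtype.val h)⟩), ?_⟩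
        apply Subtype.ext
        funext j
        fin_cases j
        · exact hfi.symm
        · rfl
        · rfl
      · -- f 1 = v₀
        have ha : Adj (f 0) v₀ := (hin _).1 (hfi ▸ h01)
        have hb : Adj v₀ (f 2) := (hout _).1 (hfi ▸ h12)
        refine ⟨.inr ⟨(⟨f 0, ha⟩, ⟨f 2, hb⟩), hne02⟩, ?_⟩
        apply Subtype.ext
        funext j
        fin_cases j
        · rfl
        · exact hfi.symm
        · rfl
      · -- f 2 = v₀
        have ha : Adj (f 0) v₀ := (hin _).1 (hfi ▸ h02)
        have hb : Adj (f 1) v₀ := (hin _).1 (hfi ▸ h12)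
        refine ⟨.inl (.inr ⟨(⟨f 0, ha⟩, ⟨f 1, hb⟩),
          fun h => hne01 (congrArg Subtype.val h)⟩), ?_⟩
        apply Subtype.ext
        funext j
        fin_cases j
        · rfl
        · rfl
        · exact hfi.symm
  have hcard : Nat.card S = Nat.card T := Nat.card_eq_of_bijective g hbij
  have hS : Nat.card S = Nat.card {p : O × O // p.1 ≠ p.2} + Nat.card {p : I × I // p.1 ≠ p.2}
      + Nat.card {p : I × O // (p.1 : V) ≠ (p.2 : V)} := by
    simp [S, Nat.card_sum]
  have hA : Nat.card {p : O × O // p.1 ≠ p.2} + oud = oud * oud := by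
    rw [houd]; exact card_offdiag
  have hB : Nat.card {p : I × I // p.1 ≠ p.2} + ind = ind * ind := by
    rw [hind]; exact card_offdiag
  have hCeq : Nat.card {p : I × O // (p.1 : V) = (p.2 : V)} = R := by
    rw [hR]
    apply Nat.card_congr
    refine ⟨fun p => ⟨(p.1.1 : V), ⟨by rw [p.2]; exact p.1.2.2, p.1.1.2⟩⟩,
      fun x => ⟨(⟨x.1, x.2.2⟩, ⟨x.1, x.2.1⟩), rfl⟩, ?_, fun x => rfl⟩
    rintro ⟨⟨⟨a, ha⟩, ⟨b, hb⟩⟩, h⟩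
    simp only at h
    subst h
    rfl
  have hC : Nat.card {p : I × O // (p.1 : V) ≠ (p.2 : V)} + R = ind * oud := by
    rw [← hCeq]
    have e2 : Nat.card {p : I × O // (p.1 : V) = (p.2 : V)} +
        Nat.card {p : I × O // (p.1 : V) ≠ (p.2 : V)} = Nat.card (I × O) := by
      rw [← Nat.card_sum]
      exact Nat.card_congr (Equiv.sumCompl _)
    rw [Nat.card_prod] at e2
    rw [hind, houd]
    omega
  have hT : cliqueCountAt AdjHat v₀ 2 = Nat.card T := rfl
  have hkey : cliqueCountAt AdjHat v₀ 2 + oud + ind + R = oud * oud + ind * ind + ind * oud := by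
    omega
  have hkey' : (cliqueCountAt AdjHat v₀ 2 : ℤ) + oud + ind + R =
      oud * oud + ind * ind + ind * oud := by exact_mod_cast hkey
  subst hdeg
  push_cast
  linear_combination hkey'
end

section
/- Let 0 < k < n be natural numbers, let G be a digraph on n vertices, and let v_0 be a vertex of G. Then k·S_k(v_0) ≤ (k+1)(n−k)·S_{k−1}(v_0), where S_j(v_0) is the number of directed (j+1)-cliques of G containing v_0. -/
/-- for `0 < k < n`, a digraph `G` on `n` vertices and a vertex `v₀`,
`k·S_k(v₀) ≤ (k+1)(n-k)·S_{k-1}(v₀)`. -/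
theorem stmt3 {V : Type*} [Fintype V] (n k : ℕ) (hn : Fintype.card V = n)
    (hk : 0 < k) (hkn : k < n)
    (Adj : V → V → Prop) (hirr : Irreflexive Adj) (v₀ : V) :
    k * cliqueCountAt Adj v₀ k ≤ (k + 1) * (n - k) * cliqueCountAt Adj v₀ (k - 1) := by
  classical
  obtain ⟨m, rfl⟩ : ∃ m, k = m + 1 := ⟨k - 1, (Nat.succ_pred_eq_of_pos hk).symm⟩
  simp only [Nat.add_sub_cancel]
  set T1 := {f : Fin (m + 1 + 1) → V // IsDirClique Adj f ∧ ∃ i, f i = v₀} with hT1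
  set T0 := {f : Fin (m + 1) → V // IsDirClique Adj f ∧ ∃ i, f i = v₀} with hT0
  -- The domain and codomain of the injection
  set A := (Σ f : T1, {i : Fin (m + 1 + 1) // f.1 i ≠ v₀}) with hA
  set B := (Fin (m + 1 + 1) × Σ g : T0, {w : V // w ∉ Set.range g.1}) with hB
  -- the injection
  have key : ∀ (f : T1) (i : Fin (m + 1 + 1)), f.1 i ≠ v₀ →
      (IsDirClique Adj (fun j => f.1 (i.succAbove j)) ∧ ∃ j, f.1 (i.succAbove j) = v₀) ∧
        f.1 i ∉ Set.range (fun j => f.1 (i.succAbove j)) := by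
    rintro ⟨f, ⟨hinj, hadj⟩, i₀, hi₀⟩ i hi
    refine ⟨⟨⟨fun a b hab => ?_, fun a b hab => hadj _ _ ?_⟩, ?_⟩, ?_⟩
    · exact (Fin.succAbove_right_injective (p := i)) (hinj hab)
    · exact Fin.succAbove_lt_succAbove_iff.mpr hab
    · obtain ⟨j, hj⟩ := Fin.exists_succAbove_eq (x := i₀) (y := i) (by
        rintro rfl; exact hi hi₀)
      exact ⟨j, by simp only [hj]; exact hi₀⟩
    · rintro ⟨j, hj⟩
      exact Fin.succAbove_ne i j (hinj hj)
  let Φ : A → B := fun p =>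
    ⟨p.2.1, ⟨⟨fun j => p.1.1 (p.2.1.succAbove j), (key p.1 p.2.1 p.2.2).1⟩,
      ⟨p.1.1 p.2.1, (key p.1 p.2.1 p.2.2).2⟩⟩⟩
  have hΦ : Function.Injective Φ := by
    rintro ⟨⟨f, hf⟩, i, hi⟩ ⟨⟨f', hf'⟩, i', hi'⟩ h
    have hii : i = i' := congrArg Prod.fst h
    subst hii
    have h1' : (fun j => f (i.succAbove j)) = fun j => f' (i.succAbove j) :=
      congrArg (fun s : B => (Prod.snd s).1.1) h
    have hval : f i = f' i := congrArg (fun s : B => ((Prod.snd s).2.1 : V)) h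
    have hff' : f = f' := by
      funext x
      rcases eq_or_ne x i with rfl | hx
      · exact hval
      · obtain ⟨j, hj⟩ := Fin.exists_succAbove_eq hx
        rw [← hj]
        exact congrFun h1' j
    subst hff'
    rfl
  -- cardinalities
  have hcardA : Nat.card A = (m + 1) * cliqueCountAt Adj v₀ (m + 1) := by
    rw [hA, Nat.card_eq_fintype_card, Fintype.card_sigma]
    have : ∀ f : T1, Fintype.card {i : Fin (m + 1 + 1) // f.1 i ≠ v₀} = m + 1 := by
      rintro ⟨f, ⟨hinj, _⟩, i₀, hi₀⟩
      have : ∀ i : Fin (m + 1 + 1), f i ≠ v₀ ↔ i ≠ i₀ := by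
        intro i
        constructor
        · rintro h rfl; exact h hi₀
        · intro h hfi; exact h (hinj (hfi.trans hi₀.symm))
      rw [Fintype.card_congr (Equiv.subtypeEquivRight this)]
      simp [Fintype.card_subtype_compl, Fintype.card_subtype_eq]
    simp only [this, Finset.sum_const, Finset.card_univ, smul_eq_mul]
    rw [cliqueCountAt, Nat.card_eq_fintype_card]
    ring
  have hcardB : Nat.card B = (m + 1 + 1) * (n - (m + 1)) * cliqueCountAt Adj v₀ m := by
    rw [hB, Nat.card_eq_fintype_card, Fintype.card_prod, Fintype.card_fin,
      Fintype.card_sigma]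
    have : ∀ g : T0, Fintype.card {w : V // w ∉ Set.range g.1} = n - (m + 1) := by
      rintro ⟨g, ⟨hinj, _⟩, _⟩
      rw [Fintype.card_subtype_compl]
      have h1 : Fintype.card {x : V // x ∈ Set.range g} = m + 1 := by
        rw [Fintype.card_congr (Equiv.refl _ : {x : V // x ∈ Set.range g} ≃ (Set.range g)),
          Set.card_range_of_injective hinj, Fintype.card_fin]
      rw [h1, hn]
    simp only [this, Finset.sum_const, Finset.card_univ, smul_eq_mul]
    rw [cliqueCountAt, Nat.card_eq_fintype_card]
    ring
  have hle : Nat.card A ≤ Nat.card B := Nat.card_le_card_of_injective Φ hΦ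
  rw [hcardA, hcardB] at hle
  linarith [hle]
end

section
/- Let G be a digraph with vertex set V of cardinality n, and let 2 ≤ k ≤ n − 1 be such that S_{k−1}(v) ≠ 0 for every vertex v of G. Define the global density coefficient D_k(G) = (1/n) · Σ_{v ∈ V} D_k(v). Then D_k(G) = 1 if and only if G is the complete digraph on V. -/
/-- The `k`-th density coefficient of a vertex `v₀` in a digraph on `n` vertices:
`D_k(v₀) = (k / ((k+1)(n-k))) · S_k(v₀)/S_{k-1}(v₀)`, as a rational number. -/
noncomputable def densityCoeff {V : Type*} (Adj : V → V → Prop) (n k : ℕ) (v₀ : V) : ℚ :=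
  (k : ℚ) / (((k : ℚ) + 1) * ((n : ℚ) - (k : ℚ))) *
    ((cliqueCountAt Adj v₀ k : ℚ) / (cliqueCountAt Adj v₀ (k - 1) : ℚ))

section Aux

variable {V : Type*} [Fintype V] {Adj : V → V → Prop}

/-- Pairs `(F, i)`: a directed `(K+1)`-clique `F` containing `v`, together with a
position `i` where `F i ≠ v`. -/
abbrev PairsType (Adj : V → V → Prop) (v : V) (K : ℕ) :=
  {x : (Fin (K+1) → V) × Fin (K+1) //
    (IsDirClique Adj x.1 ∧ ∃ i, x.1 i = v) ∧ x.1 x.2 ≠ v}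

/-- Triples `(g, w, p)`: a directed `K`-clique `g` containing `v`, a vertex `w` outside
the range of `g`, and an insertion position `p`. -/
abbrev TriplesType (Adj : V → V → Prop) (v : V) (K : ℕ) :=
  {x : (Fin K → V) × V × Fin (K+1) //
    (IsDirClique Adj x.1 ∧ ∃ i, x.1 i = v) ∧ x.2.1 ∉ Set.range x.1}

lemma isDirClique_removeNth {K : ℕ} {f : Fin (K+1) → V} (hf : IsDirClique Adj f)
    (p : Fin (K+1)) : IsDirClique Adj (f ∘ p.succAbove) :=
  ⟨hf.1.comp Fin.succAbove_right_injective,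
   fun i j hij => hf.2 _ _ (Fin.strictMono_succAbove p hij)⟩

lemma insertNth_injective_aux {K : ℕ} {g : Fin K → V} (hg : Function.Injective g)
    (p : Fin (K+1)) {w : V} (hw : w ∉ Set.range g) :
    Function.Injective (p.insertNth w g) := by
  intro a b hab
  rcases eq_or_ne a p with ha | ha
  · rcases eq_or_ne b p with hb | hb
    · rw [ha, hb]
    · obtain ⟨j, rfl⟩ := Fin.exists_succAbove_eq hb
      subst ha
      simp only [Fin.insertNth_apply_same, Fin.insertNth_apply_succAbove] at hab
      exact absurd ⟨j, hab.symm⟩ hw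
  · obtain ⟨i, rfl⟩ := Fin.exists_succAbove_eq ha
    rcases eq_or_ne b p with hb | hb
    · subst hb
      simp only [Fin.insertNth_apply_same, Fin.insertNth_apply_succAbove] at hab
      exact absurd ⟨i, hab⟩ hw
    · obtain ⟨j, rfl⟩ := Fin.exists_succAbove_eq hb
      simp only [Fin.insertNth_apply_succAbove] at hab
      rw [hg hab]

lemma card_pairs (v : V) (K : ℕ) :
    Nat.card (PairsType Adj v K)
      = K * Nat.card {f : Fin (K+1) → V // IsDirClique Adj f ∧ ∃ i, f i = v} := by
  classical
  let e : PairsType Adj v K ≃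
      Σ F : {f : Fin (K+1) → V // IsDirClique Adj f ∧ ∃ i, f i = v},
        {i : Fin (K+1) // F.1 i ≠ v} :=
    { toFun := fun x => ⟨⟨x.1.1, x.2.1⟩, ⟨x.1.2, x.2.2⟩⟩
      invFun := fun s => ⟨(s.1.1, s.2.1), s.1.2, s.2.2⟩
      left_inv := fun x => rfl
      right_inv := fun s => rfl }
  rw [Nat.card_congr e]
  simp only [Nat.card_eq_fintype_card]
  rw [Fintype.card_sigma]
  have hfib : ∀ F : {f : Fin (K+1) → V // IsDirClique Adj f ∧ ∃ i, f i = v},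
      Fintype.card {i : Fin (K+1) // F.1 i ≠ v} = K := by
    rintro ⟨f, ⟨hinj, hedge⟩, i₀, hi₀⟩
    have h1 : Fintype.card {i : Fin (K+1) // f i = v} = 1 :=
      Fintype.card_eq_one_iff.mpr ⟨⟨i₀, hi₀⟩, fun j => Subtype.ext (hinj (j.2.trans hi₀.symm))⟩
    have h2 : Fintype.card {i : Fin (K+1) // ¬ f i = v}
        = Fintype.card (Fin (K+1)) - Fintype.card {i : Fin (K+1) // f i = v} :=
      Fintype.card_subtype_compl _
    calc Fintype.card {i : Fin (K+1) // f i ≠ v}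
        = Fintype.card (Fin (K+1)) - Fintype.card {i : Fin (K+1) // f i = v} := h2
      _ = K := by rw [h1, Fintype.card_fin]; omega
  simp only [hfib, Finset.sum_const, smul_eq_mul, Finset.card_univ]
  ring

lemma card_triples (v : V) (K : ℕ) :
    Nat.card (TriplesType Adj v K)
      = ((Fintype.card V - K) * (K+1)) *
          Nat.card {g : Fin K → V // IsDirClique Adj g ∧ ∃ i, g i = v} := by
  classical
  let e : TriplesType Adj v K ≃
      Σ g : {g : Fin K → V // IsDirClique Adj g ∧ ∃ i, g i = v},
        ({w : V // w ∉ Set.range g.1} × Fin (K+1)) :=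
    { toFun := fun x => ⟨⟨x.1.1, x.2.1⟩, ⟨x.1.2.1, x.2.2⟩, x.1.2.2⟩
      invFun := fun s => ⟨(s.1.1, s.2.1.1, s.2.2), s.1.2, s.2.1.2⟩
      left_inv := fun x => rfl
      right_inv := fun s => rfl }
  rw [Nat.card_congr e]
  simp only [Nat.card_eq_fintype_card]
  rw [Fintype.card_sigma]
  have hfib : ∀ g : {g : Fin K → V // IsDirClique Adj g ∧ ∃ i, g i = v},
      Fintype.card ({w : V // w ∉ Set.range g.1} × Fin (K+1))
        = (Fintype.card V - K) * (K+1) := by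
    rintro ⟨g, ⟨hinj, hedge⟩, hgv⟩
    have h1 : Fintype.card {w : V // w ∈ Set.range g} = K := by
      rw [Set.card_range_of_injective hinj, Fintype.card_fin]
    have h2 : Fintype.card {w : V // ¬ w ∈ Set.range g}
        = Fintype.card V - Fintype.card {w : V // w ∈ Set.range g} :=
      Fintype.card_subtype_compl _
    rw [Fintype.card_prod, Fintype.card_fin]
    congr 1
    calc Fintype.card {w : V // w ∉ Set.range g}
        = Fintype.card V - Fintype.card {w : V // w ∈ Set.range g} := h2
      _ = Fintype.card V - K := by rw [h1]
  simp only [hfib, Finset.sum_const, smul_eq_mul, Finset.card_univ]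
  ring

/-- The insertion property at a vertex `v`: inserting any outside vertex at any position
into any directed `K`-clique containing `v` again yields a directed clique. -/
def InsProp (Adj : V → V → Prop) (v : V) (K : ℕ) : Prop :=
  ∀ (g : Fin K → V) (w : V) (p : Fin (K+1)), IsDirClique Adj g → (∃ i, g i = v) →
    w ∉ Set.range g → IsDirClique Adj (p.insertNth w g)

lemma key_counting (v : V) (K : ℕ) :
    Nat.card (PairsType Adj v K) ≤ Nat.card (TriplesType Adj v K) ∧
    (Nat.card (PairsType Adj v K) = Nat.card (TriplesType Adj v K) ↔ InsProp Adj v K) := by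
  classical
  have reconstr : ∀ (f : Fin (K+1) → V) (p : Fin (K+1)),
      p.insertNth (f p) (f ∘ p.succAbove) = f := fun f p => Fin.insertNth_self_removeNth p f
  have prf : ∀ x : PairsType Adj v K,
      (IsDirClique Adj (x.1.1 ∘ x.1.2.succAbove) ∧ ∃ i, (x.1.1 ∘ x.1.2.succAbove) i = v) ∧
        x.1.1 x.1.2 ∉ Set.range (x.1.1 ∘ x.1.2.succAbove) := by
    rintro ⟨⟨f, i⟩, ⟨hcl, j, hj⟩, hne⟩
    refine ⟨⟨isDirClique_removeNth hcl i, ?_⟩, ?_⟩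
    · have hji : j ≠ i := fun h => hne (h ▸ hj)
      obtain ⟨t, ht⟩ := Fin.exists_succAbove_eq hji
      refine ⟨t, ?_⟩
      show f (i.succAbove t) = v
      rw [ht]; exact hj
    · rintro ⟨t, ht⟩
      exact Fin.succAbove_ne i t (hcl.1 ht)
  let Φ : PairsType Adj v K → TriplesType Adj v K :=
    fun x => ⟨(x.1.1 ∘ x.1.2.succAbove, x.1.1 x.1.2, x.1.2), prf x⟩
  have hΦinj : Function.Injective Φ := by
    rintro ⟨⟨f, i⟩, hf⟩ ⟨⟨f', i'⟩, hf'⟩ h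
    have hval := congrArg Subtype.val h
    have h1 : f ∘ i.succAbove = f' ∘ i'.succAbove := congrArg Prod.fst hval
    have h2 : f i = f' i' := congrArg (fun t => t.2.1) hval
    have h3 : i = i' := congrArg (fun t => t.2.2) hval
    subst h3
    have hff : f = f' := by rw [← reconstr f i, ← reconstr f' i, h1, h2]
    subst hff
    rfl
  have hsurj_iff : Function.Surjective Φ ↔ InsProp Adj v K := by
    constructor
    · intro hs g w p hg hgv hw
      obtain ⟨⟨⟨f, i⟩, hf⟩, hΦ⟩ := hs ⟨(g, w, p), ⟨hg, hgv⟩, hw⟩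
      have hval := congrArg Subtype.val hΦ
      have h1 : f ∘ i.succAbove = g := congrArg Prod.fst hval
      have h2 : f i = w := congrArg (fun t => t.2.1) hval
      have h3 : i = p := congrArg (fun t => t.2.2) hval
      have hfi : p.insertNth w g = f := by
        rw [← h1, ← h2, ← h3]; exact reconstr f i
      rw [hfi]
      exact hf.1.1
    · rintro hP ⟨⟨g, w, p⟩, ⟨hg, j, hj⟩, hw⟩
      have hF : IsDirClique Adj (p.insertNth w g) := hP g w p hg ⟨j, hj⟩ hw
      have hFv : ∃ i, (p.insertNth w g : Fin (K+1) → V) i = v := by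
        refine ⟨p.succAbove j, ?_⟩
        rw [Fin.insertNth_apply_succAbove]
        exact hj
      have hFp : (p.insertNth w g : Fin (K+1) → V) p ≠ v := by
        rw [Fin.insertNth_apply_same]
        rintro rfl
        exact hw ⟨j, hj⟩
      refine ⟨⟨(p.insertNth w g, p), ⟨hF, hFv⟩, hFp⟩, ?_⟩
      apply Subtype.ext
      show ((p.insertNth w g : Fin (K+1) → V) ∘ p.succAbove,
          (p.insertNth w g : Fin (K+1) → V) p, p) = (g, w, p)
      have e1 : (p.insertNth w g : Fin (K+1) → V) ∘ p.succAbove = g :=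
        funext fun t => Fin.insertNth_apply_succAbove (α := fun _ => V) p w g t
      have e2 : (p.insertNth w g : Fin (K+1) → V) p = w := Fin.insertNth_apply_same (α := fun _ => V) p w g
      rw [e1, e2]
  refine ⟨Nat.card_le_card_of_injective Φ hΦinj, ?_, fun hP =>
    Nat.card_eq_of_bijective Φ ⟨hΦinj, hsurj_iff.mpr hP⟩⟩
  intro hcard
  apply hsurj_iff.mp
  have hbij : Function.Bijective Φ := by
    rw [Fintype.bijective_iff_injective_and_card]
    exact ⟨hΦinj, by rwa [← Nat.card_eq_fintype_card, ← Nat.card_eq_fintype_card]⟩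
  exact hbij.2

end Aux

/-- for a digraph `G` on `n` vertices and `2 ≤ k ≤ n - 1` such that
`S_{k-1}(v) ≠ 0` for every vertex `v`, the global density coefficient
`D_k(G) = (1/n) Σ_v D_k(v)` equals `1` if and only if `G` is the complete digraph. -/
theorem stmt9 {V : Type*} [Fintype V] (n k : ℕ) (hn : Fintype.card V = n)
    (hk : 2 ≤ k) (hkn : k ≤ n - 1)
    (Adj : V → V → Prop) (hirr : Irreflexive Adj)
    (hS : ∀ v : V, cliqueCountAt Adj v (k - 1) ≠ 0) :
    (1 / (n : ℚ)) * ∑ v : V, densityCoeff Adj n k v = 1 ↔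
      (∀ x y : V, x ≠ y → Adj x y) := by
  classical
  subst hn
  obtain ⟨m, rfl⟩ := Nat.exists_eq_add_of_le' hk
  set n := Fintype.card V with hn'
  have hn3 : m + 3 ≤ n := by omega
  have hS1eq : ∀ v : V, cliqueCountAt Adj v (m + 2 - 1)
      = Nat.card {g : Fin (m+2) → V // IsDirClique Adj g ∧ ∃ i, g i = v} := fun v => rfl
  have ha : ∀ v : V, Nat.card (PairsType Adj v (m+2)) = (m+2) * cliqueCountAt Adj v (m+2) :=
    fun v => card_pairs v (m+2)
  have hb : ∀ v : V, Nat.card (TriplesType Adj v (m+2))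
      = ((n - (m+2)) * (m+3)) * cliqueCountAt Adj v (m + 2 - 1) :=
    fun v => card_triples v (m+2)
  have hKn : m + 2 ≤ n := by omega
  have hcast_sub : ((n - (m+2) : ℕ) : ℚ) = (n : ℚ) - ((m+2 : ℕ) : ℚ) := by
    exact Nat.cast_sub hKn
  have hc : ((n : ℚ) - ((m+2 : ℕ) : ℚ)) ≠ 0 := by
    rw [← hcast_sub]
    have h1 : 1 ≤ n - (m+2) := by omega
    have h2 : (0:ℚ) < ((n - (m+2) : ℕ) : ℚ) := by exact_mod_cast h1
    exact ne_of_gt h2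
  have hD : ∀ v : V, densityCoeff Adj n (m+2) v
      = (Nat.card (PairsType Adj v (m+2)) : ℚ) / (Nat.card (TriplesType Adj v (m+2)) : ℚ) := by
    intro v
    rw [ha, hb]
    simp only [densityCoeff]
    have hs0 : ((cliqueCountAt Adj v (m + 2 - 1) : ℕ) : ℚ) ≠ 0 := by
      exact_mod_cast hS v
    push_cast [Nat.cast_sub hKn]
    field_simp
    ring
  have hble : ∀ v : V, (0 : ℚ) < (Nat.card (TriplesType Adj v (m+2)) : ℚ) := by
    intro v
    have hne : Nat.card (TriplesType Adj v (m+2)) ≠ 0 := by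
      rw [hb]
      have h1 : n - (m+2) ≠ 0 := by omega
      exact Nat.mul_ne_zero (Nat.mul_ne_zero h1 (by omega)) (hS v)
    exact_mod_cast Nat.pos_of_ne_zero hne
  have hDle : ∀ v : V, densityCoeff Adj n (m+2) v ≤ 1 := by
    intro v
    rw [hD, div_le_one (hble v)]
    exact_mod_cast (key_counting v (m+2)).1
  have hD1 : ∀ v : V, densityCoeff Adj n (m+2) v = 1 ↔
      Nat.card (PairsType Adj v (m+2)) = Nat.card (TriplesType Adj v (m+2)) := by
    intro v
    rw [hD, div_eq_one_iff_eq (ne_of_gt (hble v))]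
    exact_mod_cast Iff.rfl
  have hn0 : (n : ℚ) ≠ 0 := by
    have h0 : 0 < n := by omega
    exact_mod_cast ne_of_gt h0
  rw [one_div, inv_mul_eq_div, div_eq_one_iff_eq hn0]
  have hsum1 : ∑ _v : V, (1 : ℚ) = (n : ℚ) := by
    rw [Finset.sum_const, Finset.card_univ, nsmul_eq_mul, mul_one, hn']
  rw [← hsum1, Finset.sum_eq_sum_iff_of_le (fun v _ => hDle v)]
  constructor
  · intro h x y hxy
    have hP : ∀ v : V, InsProp Adj v (m+2) := fun v =>
      (key_counting v (m+2)).2.mp ((hD1 v).mp (h v (Finset.mem_univ v)))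
    have hne : Nonempty {g : Fin (m+2) → V // IsDirClique Adj g ∧ ∃ i, g i = x} := by
      have hx := hS x
      rw [hS1eq] at hx
      exact (Nat.card_ne_zero.mp hx).1
    obtain ⟨g, hg, hgx⟩ := hne
    have main : ∀ g' : Fin (m+2) → V, IsDirClique Adj g' → (∃ i, g' i = x) →
        y ∉ Set.range g' → Adj x y := by
      rintro g' hg' ⟨j, hj⟩ hy
      have hcl := hP x g' y (Fin.last (m+2)) hg' ⟨j, hj⟩ hy
      have hedge := hcl.2 ((Fin.last (m+2)).succAbove j) (Fin.last (m+2))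
        (by rw [Fin.succAbove_last]; exact Fin.castSucc_lt_last j)
      have e1 : ((Fin.last (m+2)).insertNth y g' : Fin (m+3) → V) ((Fin.last (m+2)).succAbove j) = x := by
        rw [Fin.insertNth_apply_succAbove]; exact hj
      have e2 : ((Fin.last (m+2)).insertNth y g' : Fin (m+3) → V) (Fin.last (m+2)) = y :=
        Fin.insertNth_apply_same _ _ _
      rwa [e1, e2] at hedge
    by_cases hy : y ∈ Set.range g
    · have hw : ∃ w, w ∉ Set.range g := by
        by_contra hcon
        push_neg at hcon
        have hsurj : Function.Surjective g := fun w => hcon w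
        have hle := Fintype.card_le_of_surjective g hsurj
        rw [Fintype.card_fin] at hle
        omega
      obtain ⟨w, hw⟩ := hw
      have hF : IsDirClique Adj ((Fin.last (m+2)).insertNth w g) :=
        hP x g w (Fin.last (m+2)) hg hgx hw
      obtain ⟨jy0, hjy0⟩ := hy
      have hjy : ((Fin.last (m+2)).insertNth w g : Fin (m+3) → V) ((Fin.last (m+2)).succAbove jy0) = y := by
        rw [Fin.insertNth_apply_succAbove]; exact hjy0
      obtain ⟨jx0, hjx0⟩ := hgx
      have hFx : ((Fin.last (m+2)).insertNth w g : Fin (m+3) → V) ((Fin.last (m+2)).succAbove jx0) = x := by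
        rw [Fin.insertNth_apply_succAbove]; exact hjx0
      refine main (((Fin.last (m+2)).insertNth w g) ∘ ((Fin.last (m+2)).succAbove jy0).succAbove)
        (isDirClique_removeNth hF _) ?_ ?_
      · have hneq : (Fin.last (m+2)).succAbove jx0 ≠ (Fin.last (m+2)).succAbove jy0 := by
          intro hidx
          exact hxy (by rw [← hFx, hidx, hjy])
        obtain ⟨t, ht⟩ := Fin.exists_succAbove_eq hneq
        refine ⟨t, ?_⟩
        show ((Fin.last (m+2)).insertNth w g : Fin (m+3) → V) (((Fin.last (m+2)).succAbove jy0).succAbove t) = x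
        rw [ht]; exact hFx
      · rintro ⟨t, ht⟩
        exact Fin.succAbove_ne ((Fin.last (m+2)).succAbove jy0) t (hF.1 (ht.trans hjy.symm))
    · exact main g hg hgx hy
  · intro hcomp v _
    apply (hD1 v).mpr
    apply (key_counting v (m+2)).2.mpr
    intro g w p hg hgv hw
    have hinj : Function.Injective (p.insertNth w g) := insertNth_injective_aux hg.1 p hw
    exact ⟨hinj, fun i j hij => hcomp _ _ (fun heq => (ne_of_lt hij) (hinj heq))⟩
end
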